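/- arXiv:1203.5348 — 3 statements merged into one kernel-verified Lean document; each statement's English description precedes it below -/
import Mathlib

section
/- A finite topological space is connected if and only if it is path connected. -/
/-- A finite topological space is connected if and only if it is path connected. -/
theorem stmt4 {X : Type*} [TopologicalSpace X] [Finite X] :
    ConnectedSpace X ↔ PathConnectedSpace X := by
  have hb : ∀ x : X, (nhds x).HasBasis (fun _ : Unit => True) (fun _ => nhdsKer {x}) := by
    intro x
    refine Filter.hasBasis_iff.2 fun t => ?_
    constructor
    · intro ht
      exact ⟨(), trivial, nhdsKer_singleton_subset_iff_mem_nhds.2 ht⟩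
    · rintro ⟨_, _, hsub⟩
      exact Filter.mem_of_superset (isOpen_nhdsKer.mem_nhds (subset_nhdsKer (Set.mem_singleton x))) hsub
  have hpc : ∀ x : X, IsPathConnected (nhdsKer ({x} : Set X)) := by
    intro x
    refine ⟨x, subset_nhdsKer (Set.mem_singleton x), ?_⟩
    intro y hy
    obtain ⟨z, hz, hspec⟩ := mem_nhdsKer_iff_specializes.1 hy
    rw [Set.mem_singleton_iff] at hz
    subst hz
    exact (hspec.joinedIn hy (subset_nhdsKer (Set.mem_singleton z))).symm
  have : LocPathConnectedSpace X :=
    ⟨fun x => (hb x).to_hasBasis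
      (fun _ _ => ⟨nhdsKer {x},
        ⟨isOpen_nhdsKer.mem_nhds (subset_nhdsKer (Set.mem_singleton x)), hpc x⟩, subset_rfl⟩)
      (fun s hs => ⟨(), trivial, nhdsKer_singleton_subset_iff_mem_nhds.2 hs.1⟩)⟩
  exact pathConnectedSpace_iff_connectedSpace.symm
end

section
/- If x is a down beat point of a finite T0 space X (i.e. the set {y : y < x} has a maximum), then the subspace X − {x} is a strong deformation retract of X. -/
/-- The specialization order of a topological space:
`specLe x y` iff every open set containing `y` contains `x`. -/
def specLe {X : Type*} [TopologicalSpace X] (x y : X) : Prop :=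
  ∀ U : Set X, IsOpen U → y ∈ U → x ∈ U

/-- If `x` is a down beat point of a finite T0 space `X` (i.e. the set
`Û_x = {y : y < x}` has a maximum), then the subspace `X − {x}` is a strong
deformation retract of `X`: there is a retraction `r` of `X` onto `X − {x}`
together with a homotopy rel `X − {x}` from the identity to `r`. -/
theorem stmt8 {X : Type*} [TopologicalSpace X] [Finite X] [T0Space X] (x : X)
    (hx : ∃ m ∈ {y : X | specLe y x ∧ y ≠ x},
      ∀ y ∈ {y : X | specLe y x ∧ y ≠ x}, specLe y m) :
    ∃ r : C(X, X), (∀ y : X, r y ≠ x) ∧ (∀ y : X, y ≠ x → r y = y) ∧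
      Nonempty ((ContinuousMap.id X).HomotopyRel r {x}ᶜ) := by
  classical
  obtain ⟨m, ⟨hmx, hmne⟩, hmax⟩ := hx
  set f : X → X := fun y => if y = x then m else y with hf
  -- continuity of f
  have hcont : Continuous f := by
    rw [continuous_def]
    intro U hU
    by_cases hmU : m ∈ U
    · have hpre : f ⁻¹' U = U ∪ nhdsKer {x} := by
        ext y
        simp only [Set.mem_preimage, Set.mem_union, hf]
        by_cases hy : y = x
        · subst hy
          simp only [if_pos rfl]
          refine ⟨fun _ => Or.inr ?_, fun _ => hmU⟩
          exact subset_nhdsKer rfl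
        · simp only [if_neg hy]
          constructor
          · exact fun h => Or.inl h
          · rintro (h | h)
            · exact h
            · rw [mem_nhdsKer_singleton] at h
              have hspec : specLe y x := fun V hV hxV =>
                (specializes_iff_forall_open.mp h) V hV hxV
              exact hmax y ⟨hspec, hy⟩ U hU hmU
      rw [hpre]
      exact hU.union isOpen_nhdsKer
    · have hpre : f ⁻¹' U = U := by
        ext y
        simp only [Set.mem_preimage, hf]
        by_cases hy : y = x
        · subst hy
          simp only [if_pos rfl]
          exact ⟨fun h => absurd h hmU, fun h => absurd (hmx U hU h) hmU⟩
        · simp only [if_neg hy]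
      rw [hpre]
      exact hU
  have hfsub : ∀ U : Set X, IsOpen U → U ⊆ f ⁻¹' U := by
    intro U hU y hy
    simp only [Set.mem_preimage, hf]
    by_cases hyx : y = x
    · subst hyx; simp only [if_pos rfl]; exact hmx U hU hy
    · simpa [if_neg hyx] using hy
  refine ⟨⟨f, hcont⟩, ?_, ?_, ?_⟩
  · intro y
    simp only [ContinuousMap.coe_mk, hf]
    by_cases hy : y = x
    · subst hy; simpa using hmne
    · simpa [if_neg hy] using hy
  · intro y hy
    simp [hf, if_neg hy]
  · -- homotopy rel {x}ᶜ
    refine ⟨?_⟩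
    refine
      { toFun := fun p => if p.1 = 0 then p.2 else f p.2
        continuous_toFun := ?_
        map_zero_left := by intro y; simp
        map_one_left := by intro y; norm_num
        prop' := ?_ }
    · rw [continuous_def]
      intro U hU
      have hpre : (fun p : unitInterval × X => if p.1 = 0 then p.2 else f p.2) ⁻¹' U
          = ({t : unitInterval | t ≠ 0} ×ˢ (f ⁻¹' U)) ∪ (Set.univ ×ˢ U) := by
        ext ⟨t, y⟩
        simp only [Set.mem_preimage, Set.mem_union, Set.mem_prod, Set.mem_setOf_eq,
          Set.mem_univ, true_and]
        by_cases ht : t = 0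
        · simp [ht]
        · simp only [if_neg ht, ne_eq, ht, not_false_eq_true, true_and]
          exact ⟨fun h => Or.inl h, fun h => h.elim id (fun h => hfsub U hU h)⟩
      rw [hpre]
      exact ((isOpen_compl_singleton.preimage continuous_id).prod (hcont.isOpen_preimage U hU)).union
        (isOpen_univ.prod hU)
    · intro t y hy
      simp only [Set.mem_compl_iff, Set.mem_singleton_iff] at hy
      simp [hf, if_neg hy]
end

section
/- If x is an up beat point of a finite T0 space X (i.e. the set {y : y > x} has a minimum), then the subspace X − {x} is a strong deformation retract of X. -/
/-- If `x` is a up beat point of a finite T0 space `X` (i.e. the set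
`F̂_x = {y : y > x}` has a minimum), then the subspace `X − {x}` is a strong
deformation retract of `X`: there is a retraction `r` of `X` onto `X − {x}`
together with a homotopy rel `X − {x}` from the identity to `r`. -/
theorem stmt9 {X : Type*} [TopologicalSpace X] [Finite X] [T0Space X] (x : X)
    (hx : ∃ m ∈ {y : X | specLe x y ∧ y ≠ x},
      ∀ y ∈ {y : X | specLe x y ∧ y ≠ x}, specLe m y) :
    ∃ r : C(X, X), (∀ y : X, r y ≠ x) ∧ (∀ y : X, y ≠ x → r y = y) ∧
      Nonempty ((ContinuousMap.id X).HomotopyRel r {x}ᶜ) := by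
  classical
  obtain ⟨m, ⟨hxm, hmx⟩, hmin⟩ := hx
  set r0 : X → X := fun y => if y = x then m else y with hr0
  -- preimages of open sets under r0 are contained in the set itself
  have hsub : ∀ U : Set X, IsOpen U → r0 ⁻¹' U ⊆ U := by
    intro U hU y hy
    simp only [Set.mem_preimage, hr0] at hy
    by_cases h : y = x
    · rw [if_pos h] at hy
      rw [h]; exact hxm U hU hy
    · rwa [if_neg h] at hy
  -- key: nhdsKer {y} ⊆ r0 ⁻¹' U whenever y ∈ r0 ⁻¹' U
  have hkey : ∀ U : Set X, IsOpen U → ∀ y ∈ r0 ⁻¹' U, nhdsKer {y} ⊆ r0 ⁻¹' U := by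
    intro U hU y hy z hz
    have hz' : ∀ V : Set X, IsOpen V → y ∈ V → z ∈ V := by
      rw [mem_nhdsKer_singleton, specializes_iff_forall_open] at hz
      exact hz
    simp only [Set.mem_preimage, hr0] at hy ⊢
    by_cases hzx : z = x
    · rw [if_pos hzx]
      by_cases hyx : y = x
      · rwa [if_pos hyx] at hy
      · rw [if_neg hyx] at hy
        have hxy : specLe x y := by
          intro V hV hyV
          rw [← hzx]; exact hz' V hV hyV
        exact hmin y ⟨hxy, hyx⟩ U hU hy
    · rw [if_neg hzx]
      by_cases hyx : y = x
      · rw [if_pos hyx] at hy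
        exact hz' U hU (by rw [hyx]; exact hxm U hU hy)
      · rw [if_neg hyx] at hy
        exact hz' U hU hy
  have hcont : Continuous r0 := by
    rw [continuous_def]
    intro U hU
    have : r0 ⁻¹' U = ⋃ y ∈ r0 ⁻¹' U, nhdsKer {y} := by
      apply Set.Subset.antisymm
      · intro y hy
        exact Set.mem_biUnion hy (subset_nhdsKer (Set.mem_singleton y))
      · exact Set.iUnion₂_subset fun y hy => hkey U hU y hy
    rw [this]
    exact isOpen_biUnion fun y _ => isOpen_nhdsKer
  refine ⟨⟨r0, hcont⟩, ?_, ?_, ?_⟩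
  · intro y
    show (if y = x then m else y) ≠ x
    by_cases h : y = x
    · rwa [if_pos h]
    · rwa [if_neg h]
  · intro y hy
    show (if y = x then m else y) = y
    rw [if_neg hy]
  · -- the homotopy
    set F : unitInterval × X → X := fun p => if p.1 = 1 then r0 p.2 else p.2 with hF
    have hFcont : Continuous F := by
      rw [continuous_def]
      intro U hU
      have : F ⁻¹' U = ({(1 : unitInterval)}ᶜ ×ˢ U) ∪ (Set.univ ×ˢ (r0 ⁻¹' U)) := by
        ext ⟨t, y⟩
        simp only [hF, Set.mem_preimage, Set.mem_union, Set.mem_prod, Set.mem_compl_iff,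
          Set.mem_singleton_iff, Set.mem_univ, true_and]
        by_cases ht : t = 1
        · simp only [if_pos ht, ht, not_true, false_and, false_or, if_true]
        · simp only [if_neg ht, ht, not_false_iff, true_and]
          constructor
          · intro h; exact Or.inl h
          · rintro (h | h)
            · exact h
            · exact hsub U hU h
      rw [this]
      exact ((isOpen_compl_singleton.prod hU).union
        (isOpen_univ.prod (hcont.isOpen_preimage U hU)))
    have h01 : (0 : unitInterval) ≠ 1 := by
      intro h
      have := congrArg (Subtype.val) h
      norm_num at this
    refine ⟨⟨⟨⟨F, hFcont⟩, ?_, ?_⟩, ?_⟩⟩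
    · intro y
      show (if (0 : unitInterval) = 1 then r0 y else y) = (ContinuousMap.id X) y
      rw [if_neg h01]; rfl
    · intro y
      show (if (1 : unitInterval) = 1 then r0 y else y) = r0 y
      rw [if_pos rfl]
    · intro t y hy
      simp only [Set.mem_compl_iff, Set.mem_singleton_iff] at hy
      show (if t = 1 then r0 y else y) = (ContinuousMap.id X) y
      by_cases ht : t = 1
      · rw [if_pos ht]
        show (if y = x then m else y) = _
        rw [if_neg hy]; rfl
      · rw [if_neg ht]; rfl
end
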